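/- If y is a vertex of P(G,w), then there do not exist two distinct simple directed cycles C₁, C₂, each of nonzero total weight, with C₁ ∪ C₂ contained in the support { e : y_e > 0 } of y. -/

import Mathlib

open Finset

/-- A simple directed cycle, identified with its arc set: the arcs
`(f i, f (i+1))` of an injective map `f : ZMod (n+1) → V`. -/
def IsCycle {V : Type} [DecidableEq V] (C : Finset (V × V)) : Prop :=
  ∃ (n : ℕ) (f : ZMod (n + 1) → V), Function.Injective f ∧
    C = Finset.image (fun i => (f i, f (i + 1))) Finset.univ

/-- Characteristic vector of an arc set. -/
def chi {V : Type} [DecidableEq V] (C : Finset (V × V)) : V × V → ℝ :=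
  fun e => if e ∈ C then 1 else 0

/-- Membership in the polyhedron `P(G,w)` of negative-weight flows:
nonnegativity, support in `E`, flow conservation at every vertex, and
total weight `-1`. -/
def memP {V : Type} [Fintype V] [DecidableEq V] (E : Finset (V × V))
    (w : V × V → ℝ) (y : V × V → ℝ) : Prop :=
  (∀ e, 0 ≤ y e) ∧ (∀ e, e ∉ E → y e = 0) ∧
  (∀ u : V, ∑ e ∈ E.filter (fun e => e.1 = u), y e
          = ∑ e ∈ E.filter (fun e => e.2 = u), y e) ∧
  (∑ e ∈ E, w e * y e = -1)

/-- A vertex (extreme point) of a convex set: a member which is not a proper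
convex combination of two distinct members. -/
def IsVertexOf {α : Type*} [AddCommGroup α] [Module ℝ α] (P : Set α) (y : α) : Prop :=
  y ∈ P ∧ ¬ ∃ y₁ ∈ P, ∃ y₂ ∈ P, y₁ ≠ y₂ ∧
    ∃ t : ℝ, 0 < t ∧ t < 1 ∧ y = t • y₁ + (1 - t) • y₂

/-!
If `C₁ ≠ C₂` are cycles of nonzero weight inside the support of `y`, then
`d = w(C₂) • χ_{C₁} - w(C₁) • χ_{C₂}` is a nonzero circulation of total weight zero whose
support lies where `y > 0`. Hence `y ± ε • d ∈ P(G,w)` for small `ε > 0`, and `y` is the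
midpoint of these two distinct points, so it is not a vertex.
-/

open Filter Topology

theorem eventually_nonneg_add_smul {ι : Type*} [Finite ι] {y d : ι → ℝ} (hy : 0 ≤ y)
    (hd : ∀ i, d i ≠ 0 → 0 < y i) : ∀ᶠ δ in 𝓝 (0 : ℝ), 0 ≤ y + δ • d := by
  simp only [Pi.le_def, eventually_all]
  intro i
  by_cases hdi : d i = 0
  · simpa [hdi] using hy i
  have hlim : Tendsto (fun δ : ℝ => y i + δ * d i) (𝓝 0) (𝓝 (y i)) := by
    simpa using ((tendsto_id (x := 𝓝 (0 : ℝ))).mul_const (d i)).const_add (y i)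
  filter_upwards [hlim.eventually_const_lt (hd i hdi)] with δ hδ
  simpa using hδ.le

theorem IsVertexOf.eq_zero_of_add_mem_of_sub_mem {α : Type*} [AddCommGroup α] [Module ℝ α]
    {P : Set α} {y d : α} (hv : IsVertexOf P y) (hadd : y + d ∈ P) (hsub : y - d ∈ P) :
    d = 0 := by
  by_contra hd
  refine hv.2 ⟨y + d, hadd, y - d, hsub, ?_, 1 / 2, by norm_num, by norm_num, ?_⟩
  · intro h
    have h2 : (2 : ℝ) • d = (y + d) - (y - d) := by module
    rw [h, sub_self] at h2
    exact hd ((smul_eq_zero.1 h2).resolve_left two_ne_zero)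
  · module

section Flows

variable {V : Type} [DecidableEq V]

theorem IsCycle.card_filter_fst_eq_card_filter_snd {C : Finset (V × V)} (hC : IsCycle C)
    (u : V) : #(C.filter (·.1 = u)) = #(C.filter (·.2 = u)) := by
  obtain ⟨n, f, hf, rfl⟩ := hC
  have harc : Function.Injective fun i : ZMod (n + 1) => (f i, f (i + 1)) :=
    fun i j h => hf (congrArg Prod.fst h)
  simp only [filter_image, card_image_of_injective _ harc]
  exact card_equiv (Equiv.subRight 1) (by simp)

theorem sum_mul_chi (S C : Finset (V × V)) (g : V × V → ℝ) :
    ∑ e ∈ S, g e * chi C e = ∑ e ∈ S ∩ C, g e := by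
  simp only [chi, mul_ite, mul_one, mul_zero, sum_ite_mem]

def circulations (E : Finset (V × V)) : Submodule ℝ (V × V → ℝ) where
  carrier := {d | (∀ e, e ∉ E → d e = 0) ∧
    ∀ u : V, ∑ e ∈ E.filter (fun e => e.1 = u), d e = ∑ e ∈ E.filter (fun e => e.2 = u), d e}
  zero_mem' := by simp
  add_mem' := by
    rintro d d' ⟨hd, hdc⟩ ⟨hd', hdc'⟩
    refine ⟨fun e he => by simp [hd e he, hd' e he], fun u => ?_⟩
    simp only [Pi.add_apply, sum_add_distrib, hdc u, hdc' u]
  smul_mem' := by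
    rintro c d ⟨hd, hdc⟩
    refine ⟨fun e he => by simp [hd e he], fun u => ?_⟩
    simp only [Pi.smul_apply, smul_eq_mul, ← mul_sum, hdc u]

theorem IsCycle.chi_mem_circulations {E C : Finset (V × V)} (hC : IsCycle C) (hCE : C ⊆ E) :
    chi C ∈ circulations E := by
  refine ⟨fun e he => if_neg fun h => he (hCE h), fun u => ?_⟩
  have hfilter (p : V × V → Prop) [DecidablePred p] :
      ∑ e ∈ E.filter p, chi C e = #(C.filter p) := by
    simpa [filter_inter, inter_eq_right.2 hCE] using sum_mul_chi (E.filter p) C 1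
  rw [hfilter, hfilter, hC.card_filter_fst_eq_card_filter_snd]

theorem memP_add_smul [Fintype V] {E : Finset (V × V)} {w y d : V × V → ℝ} (hy : memP E w y)
    (hd : d ∈ circulations E) (hdw : ∑ e ∈ E, w e * d e = 0) {δ : ℝ}
    (hpos : 0 ≤ y + δ • d) : memP E w (y + δ • d) := by
  obtain ⟨-, hyE, hyc, hyw⟩ := hy
  obtain ⟨hdE, hdc⟩ := hd
  refine ⟨hpos, fun e he => by simp [hyE e he, hdE e he], fun u => ?_, ?_⟩
  · simp only [Pi.add_apply, Pi.smul_apply, smul_eq_mul, sum_add_distrib, ← mul_sum, hyc u,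
      hdc u]
  · simp only [Pi.add_apply, Pi.smul_apply, smul_eq_mul, mul_add, sum_add_distrib, hyw,
      mul_left_comm _ δ, ← mul_sum, hdw]
    ring

theorem exists_ne_zero_circulation_of_isCycle {E C₁ C₂ : Finset (V × V)} {w : V × V → ℝ}
    (hC₁ : IsCycle C₁) (hC₂ : IsCycle C₂) (hne : C₁ ≠ C₂) (hC₁E : C₁ ⊆ E) (hC₂E : C₂ ⊆ E)
    (hw₁ : ∑ e ∈ C₁, w e ≠ 0) (hw₂ : ∑ e ∈ C₂, w e ≠ 0) :
    ∃ d ∈ circulations E, d ≠ 0 ∧ ∑ e ∈ E, w e * d e = 0 ∧ ∀ e, d e ≠ 0 → e ∈ C₁ ∪ C₂ := by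
  refine ⟨(∑ e ∈ C₂, w e) • chi C₁ - (∑ e ∈ C₁, w e) • chi C₂,
    sub_mem (Submodule.smul_mem _ _ (hC₁.chi_mem_circulations hC₁E))
      (Submodule.smul_mem _ _ (hC₂.chi_mem_circulations hC₂E)), ?_, ?_, ?_⟩
  · intro h0
    apply hne
    ext e
    have he := congrFun h0 e
    by_cases h₁ : e ∈ C₁ <;> by_cases h₂ : e ∈ C₂ <;> simp_all [chi]
  · simp only [Pi.sub_apply, Pi.smul_apply, smul_eq_mul, mul_sub, mul_left_comm (w _),
      sum_sub_distrib, ← mul_sum, sum_mul_chi, inter_eq_right.2 hC₁E, inter_eq_right.2 hC₂E]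
    ring
  · intro e he
    by_contra hout
    simp_all [chi]

theorem IsVertexOf.eq_zero_of_mem_circulations [Fintype V] {E : Finset (V × V)}
    {w y d : V × V → ℝ} (hv : IsVertexOf {z | memP E w z} y) (hd : d ∈ circulations E)
    (hdw : ∑ e ∈ E, w e * d e = 0) (hsupp : ∀ e, d e ≠ 0 → 0 < y e) : d = 0 := by
  obtain ⟨ε, hε, hnonneg⟩ :=
    Metric.eventually_nhds_iff.1 (eventually_nonneg_add_smul hv.1.1 hsupp)
  have hmem (δ : ℝ) (hδ : |δ| < ε) : y + δ • d ∈ {z | memP E w z} :=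
    memP_add_smul hv.1 hd hdw (hnonneg (by simpa using hδ))
  have hhalf : |ε / 2| < ε := by rw [abs_of_pos (by positivity)]; linarith
  have hsmul : (ε / 2) • d = 0 :=
    hv.eq_zero_of_add_mem_of_sub_mem (hmem _ hhalf)
      (by simpa [sub_eq_add_neg] using hmem (-(ε / 2)) (by rwa [abs_neg]))
  exact (smul_eq_zero.1 hsmul).resolve_left (by positivity)

end Flows

/-- the support of a vertex of `P(G,w)` does not contain two distinct
cycles, each of nonzero total weight. -/
theorem stmt_4 {V : Type} [Fintype V] [DecidableEq V]
    (E : Finset (V × V)) (w : V × V → ℝ) (y : V × V → ℝ)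
    (hv : IsVertexOf {z | memP E w z} y) :
    ¬ ∃ C₁ C₂ : Finset (V × V), IsCycle C₁ ∧ IsCycle C₂ ∧ C₁ ≠ C₂ ∧
        C₁ ⊆ E ∧ C₂ ⊆ E ∧ (∑ e ∈ C₁, w e) ≠ 0 ∧ (∑ e ∈ C₂, w e) ≠ 0 ∧
        ∀ e ∈ C₁ ∪ C₂, 0 < y e := by
  rintro ⟨C₁, C₂, hC₁, hC₂, hne, hC₁E, hC₂E, hw₁, hw₂, hpos⟩
  obtain ⟨d, hd, hd0, hdw, hsupp⟩ :=
    exists_ne_zero_circulation_of_isCycle hC₁ hC₂ hne hC₁E hC₂E hw₁ hw₂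
  exact hd0 (hv.eq_zero_of_mem_circulations hd hdw fun e he => hpos e (hsupp e he))
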